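/- Let P and Q_B be probability distributions with full support on a finite alphabet, α > 0, α ≠ 1, and Q* the geometric mixture Q*(x) ∝ P(x)^α Q_B(x)^{1−α}. Then the expected log-wealth ratio satisfies D(P‖Q_B) − D(P‖Q*) = α D(P‖Q_B) + (1−α) D_α(P‖Q_B). -/

import Mathlib

open Finset Real

noncomputable def klDiv {X : Type} [Fintype X] (p q : X → ℝ) : ℝ :=
  ∑ x, p x * Real.logb 2 (p x / q x)

noncomputable def renyiDiv {X : Type} [Fintype X] (α : ℝ) (p q : X → ℝ) : ℝ :=
  (1 / (α - 1)) * Real.logb 2 (∑ x, p x ^ α * q x ^ (1 - α))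

theorem expected_log_wealth_of_optimal_strategy
    {X : Type} [Fintype X] [Nonempty X]
    (P QB : X → ℝ)
    (hPpos : ∀ x, 0 < P x) (hQpos : ∀ x, 0 < QB x)
    (hP1 : ∑ x, P x = 1) (hQ1 : ∑ x, QB x = 1)
    (α : ℝ) (hα0 : 0 < α) (hα1 : α ≠ 1) :
    letI Z : ℝ := ∑ x', P x' ^ α * QB x' ^ (1 - α)
    letI Qstar : X → ℝ := fun x => P x ^ α * QB x ^ (1 - α) / Z
    klDiv P QB - klDiv P Qstar =
      α * klDiv P QB + (1 - α) * renyiDiv α P QB := by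
  have hZpos : 0 < ∑ x', P x' ^ α * QB x' ^ (1 - α) :=
    Finset.sum_pos (fun x _ => mul_pos (Real.rpow_pos_of_pos (hPpos x) _)
      (Real.rpow_pos_of_pos (hQpos x) _)) Finset.univ_nonempty
  set Z : ℝ := ∑ x', P x' ^ α * QB x' ^ (1 - α) with hZ
  have hkey : klDiv P (fun x => P x ^ α * QB x ^ (1 - α) / Z)
      = (1 - α) * klDiv P QB + Real.logb 2 Z := by
    have hterm : ∀ x, P x * Real.logb 2 (P x / (P x ^ α * QB x ^ (1 - α) / Z))
        = (1 - α) * (P x * Real.logb 2 (P x / QB x)) + P x * Real.logb 2 Z := by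
      intro x
      have hp := hPpos x
      have hq := hQpos x
      have hratio : P x / (P x ^ α * QB x ^ (1 - α) / Z)
          = (P x / QB x) ^ (1 - α) * Z := by
        have hPsplit : P x ^ α * P x ^ (1 - α) = P x := by
          rw [← Real.rpow_add hp]; norm_num
        rw [Real.div_rpow hp.le hq.le]
        have hpq : (0:ℝ) < P x ^ α * QB x ^ (1 - α) :=
          mul_pos (Real.rpow_pos_of_pos hp _) (Real.rpow_pos_of_pos hq _)
        field_simp
        linear_combination (-1 : ℝ) * hPsplit
      rw [hratio, Real.logb_mul (by positivity) (ne_of_gt hZpos),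
        Real.logb_rpow_eq_mul_logb_of_pos (by positivity)]
      ring
    unfold klDiv
    rw [Finset.sum_congr rfl (fun x _ => hterm x), Finset.sum_add_distrib,
      ← Finset.mul_sum, ← Finset.sum_mul, hP1]
    ring
  show klDiv P QB - klDiv P (fun x => P x ^ α * QB x ^ (1 - α) / Z)
      = α * klDiv P QB + (1 - α) * renyiDiv α P QB
  rw [hkey]
  unfold renyiDiv
  rw [← hZ]
  have h1 : α - 1 ≠ 0 := sub_ne_zero.mpr hα1
  field_simp
  ring
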